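/- Let 𝓗 be a finite arrangement of linear hyperplanes through the origin in ℝ^n and let D be a codimension-one face of 𝓗. Then there are exactly two chambers C with D ≤ C, and these two chambers are opposed by D. -/

import Mathlib

noncomputable section

variable {V : Type*} [NormedAddCommGroup V] [NormedSpace ℝ V] {ι : Type*}

/-- The sign vector of a point with respect to a family of defining linear forms. -/
def sgnVec (f : ι → V →ₗ[ℝ] ℝ) (x : V) : ι → SignType := fun i => SignType.sign (f i x)

/-- The face (cell) of the arrangement containing the point `x`:
the level set of the sign-vector map through `x`. -/
def faceOf (f : ι → V →ₗ[ℝ] ℝ) (x : V) : Set V := {y | sgnVec f y = sgnVec f x}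

/-- The type of faces (cells) of the arrangement with defining forms `f`. -/
def Face (f : ι → V →ₗ[ℝ] ℝ) : Type _ := {C : Set V // ∃ x : V, C = faceOf f x}

/-- The closure order on faces: `C' ≤ C` iff `C' ⊆ closure C`. -/
def FaceLE {f : ι → V →ₗ[ℝ] ℝ} (C' C : Face f) : Prop := C'.1 ⊆ closure C.1

lemma FaceLE.refl {f : ι → V →ₗ[ℝ] ℝ} (C : Face f) : FaceLE C C := subset_closure

lemma FaceLE.trans' {f : ι → V →ₗ[ℝ] ℝ} {C'' C' C : Face f}
    (h1 : FaceLE C'' C') (h2 : FaceLE C' C) : FaceLE C'' C :=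
  h1.trans (closure_minimal h2 isClosed_closure)

/-- The face of the origin. -/
def faceO (f : ι → V →ₗ[ℝ] ℝ) : Face f := ⟨faceOf f 0, 0, rfl⟩

/-- The face of the origin is below every face in the closure order. -/
lemma faceO_le {f : ι → V →ₗ[ℝ] ℝ} (C : Face f) : FaceLE (faceO f) C := by
  obtain ⟨S, x, rfl⟩ := C
  intro y hy
  have hy0 : ∀ i, f i y = 0 := by
    intro i
    have : SignType.sign (f i y) = SignType.sign (f i (0 : V)) := congrFun hy i
    simpa using this
  have hten : Filter.Tendsto (fun t : ℝ => y + t • x) (nhdsWithin 0 (Set.Ioi 0)) (nhds y) := by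
    have h : Filter.Tendsto (fun t : ℝ => y + t • x) (nhds 0) (nhds (y + (0:ℝ) • x)) :=
      tendsto_const_nhds.add ((continuous_id.smul continuous_const).tendsto 0)
    simpa using h.mono_left nhdsWithin_le_nhds
  refine mem_closure_of_tendsto hten ?_
  filter_upwards [self_mem_nhdsWithin] with t ht
  show y + t • x ∈ faceOf f x
  funext i
  simp only [sgnVec, map_add, map_smul, hy0 i, zero_add, smul_eq_mul]
  rw [sign_mul, sign_pos ht, one_mul]

universe w

/-- A double representation of the face poset of an arrangement. -/
structure DoubleRep (f : ι → V →ₗ[ℝ] ℝ) where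
  E : Face f → ModuleCat.{w} ℂ
  finDim : ∀ C, FiniteDimensional ℂ (E C)
  γ : ∀ C' C : Face f, FaceLE C' C → (E C' →ₗ[ℂ] E C)
  δ : ∀ C' C : Face f, FaceLE C' C → (E C →ₗ[ℂ] E C')
  γ_id : ∀ (C : Face f) (h : FaceLE C C), γ C C h = LinearMap.id
  δ_id : ∀ (C : Face f) (h : FaceLE C C), δ C C h = LinearMap.id
  γ_comp : ∀ (C'' C' C : Face f) (h1 : FaceLE C'' C') (h2 : FaceLE C' C),
    γ C'' C (h1.trans' h2) = (γ C' C h2).comp (γ C'' C' h1)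
  δ_comp : ∀ (C'' C' C : Face f) (h1 : FaceLE C'' C') (h2 : FaceLE C' C),
    δ C'' C (h1.trans' h2) = (δ C'' C' h1).comp (δ C' C h2)

/-- The map `φ_{AB} = γ_{OB} ∘ δ_{AO}` of a double representation. -/
def phiMap {f : ι → V →ₗ[ℝ] ℝ} (ψ : DoubleRep f) (A B : Face f) : ψ.E A →ₗ[ℂ] ψ.E B :=
  (ψ.γ (faceO f) B (faceO_le B)).comp (ψ.δ (faceO f) A (faceO_le A))

/-- Monotonicity: `γ_{C'C} ∘ δ_{CC'} = id`. -/
def Monotonicity {f : ι → V →ₗ[ℝ] ℝ} (ψ : DoubleRep f) : Prop :=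
  ∀ (C' C : Face f) (h : FaceLE C' C), (ψ.γ C' C h).comp (ψ.δ C' C h) = LinearMap.id

/-- A collinear triple of faces. -/
def Collin3 {f : ι → V →ₗ[ℝ] ℝ} (A B C : Face f) : Prop :=
  ∃ a ∈ A.1, ∃ b ∈ B.1, ∃ c ∈ C.1, b ∈ segment ℝ a c

/-- Transitivity: `φ_{AC} = φ_{BC} ∘ φ_{AB}` for collinear triples. -/
def Transitivity {f : ι → V →ₗ[ℝ] ℝ} (ψ : DoubleRep f) : Prop :=
  ∀ A B C : Face f, Collin3 A B C → phiMap ψ A C = (phiMap ψ B C).comp (phiMap ψ A B)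

/-- Two faces of equal dimension and equal span are opposed by a face `D` of one lower
dimension. -/
def Opposed (f : ι → V →ₗ[ℝ] ℝ) (C1 C2 D : Face f) : Prop :=
  C1 ≠ C2 ∧ Submodule.span ℝ C1.1 = Submodule.span ℝ C2.1 ∧
  FaceLE D C1 ∧ FaceLE D C2 ∧
  Module.finrank ℝ (Submodule.span ℝ D.1) + 1 = Module.finrank ℝ (Submodule.span ℝ C1.1) ∧
  ∀ i, (∀ d ∈ D.1, f i d = 0) → ∀ y ∈ C1.1, ∀ z ∈ C2.1,
    SignType.sign (f i y) = - SignType.sign (f i z) ∧ SignType.sign (f i y) ≠ 0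

/-- Invertibility: `φ_{C₁C₂}` is an isomorphism whenever `C₁, C₂` are opposed by a face. -/
def Invertibility {f : ι → V →ₗ[ℝ] ℝ} (ψ : DoubleRep f) : Prop :=
  ∀ C1 C2 D : Face f, Opposed f C1 C2 D → Function.Bijective (phiMap ψ C1 C2)

/-- Membership in the category `𝓙_𝓗`. -/
def InJ {f : ι → V →ₗ[ℝ] ℝ} (ψ : DoubleRep f) : Prop :=
  Monotonicity ψ ∧ Transitivity ψ ∧ Invertibility ψ

/-- A chamber: a face on which no defining form vanishes. -/
def IsChamber (f : ι → V →ₗ[ℝ] ℝ) (C : Face f) : Prop := ∀ i, ∀ y ∈ C.1, f i y ≠ 0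

/-- A codimension-one face: exactly one defining form vanishes on it. -/
def IsCodimOne (f : ι → V →ₗ[ℝ] ℝ) (D : Face f) : Prop := ∃! i, ∀ y ∈ D.1, f i y = 0

/-- A subrepresentation of a double representation. -/
def IsSubrep {f : ι → V →ₗ[ℝ] ℝ} (ψ : DoubleRep f) (F : ∀ C, Submodule ℂ (ψ.E C)) : Prop :=
  ∀ (C' C : Face f) (h : FaceLE C' C),
    (∀ v ∈ F C', ψ.γ C' C h v ∈ F C) ∧ (∀ v ∈ F C, ψ.δ C' C h v ∈ F C')

/-- Simplicity of a double representation. -/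
def IsSimpleRep {f : ι → V →ₗ[ℝ] ℝ} (ψ : DoubleRep f) : Prop :=
  (∃ (C : Face f) (v : ψ.E C), v ≠ 0) ∧
  ∀ F, IsSubrep ψ F → (∀ C, F C = ⊥) ∨ (∀ C, F C = ⊤)

/-!
A point `d` of a codimension-one face lies on exactly one hyperplane `H = ker f i₀`. Moving off `d`
by `t • w` with small `t > 0` keeps the nonzero signs of `d` and takes the signs of `w` where `d`
vanishes, so `d + t • e` and `d - t • e` (with `f i₀ e ≠ 0`) lie in chambers whose closures contain
the face of `d`. Conversely, near a point of the closure of a face the nonzero signs of that face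
are forced, so a chamber above the face of `d` is determined by its sign on `H`. Chambers are open,
hence span the space, while the face of `d` spans `H`, which gives the dimension count.
-/

open Filter Topology

section Arrangement

variable {f : ι → V →ₗ[ℝ] ℝ}

/-- The composition `σ ∘ τ` of sign vectors, as in oriented matroid theory. -/
def signComp (σ τ : ι → SignType) : ι → SignType := fun i => if σ i = 0 then τ i else σ i

lemma signComp_eq_left {σ τ : ι → SignType} (h : ∀ i, σ i = 0 → τ i = 0) : signComp σ τ = σ := by
  funext i
  by_cases hi : σ i = 0
  · simp only [signComp, hi, if_true, h i hi]
  · simp only [signComp, hi, if_false]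

lemma eventually_sign_eq {a : ℝ} (ha : a ≠ 0) : ∀ᶠ r in 𝓝 a, SignType.sign r = SignType.sign a := by
  have h := continuousAt_sign_of_ne_zero ha
  rw [ContinuousAt, nhds_discrete SignType] at h
  exact tendsto_pure.mp h

lemma eventually_sign_add_mul (a b : ℝ) :
    ∀ᶠ t in 𝓝[>] 0, SignType.sign (a + t * b) =
      if a = 0 then SignType.sign b else SignType.sign a := by
  by_cases ha : a = 0
  · filter_upwards [self_mem_nhdsWithin] with t (ht : 0 < t)
    simp [ha, sign_mul, sign_pos ht]
  · have hlim : Tendsto (fun t : ℝ => a + t * b) (𝓝 0) (𝓝 a) :=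
      (continuous_const.add (continuous_id.mul continuous_const)).tendsto' 0 a (by simp)
    filter_upwards [nhdsWithin_le_nhds (hlim.eventually (eventually_sign_eq ha))] with t ht
    rw [ht, if_neg ha]

lemma sgnVec_apply_eq_zero {x : V} {i : ι} : sgnVec f x i = 0 ↔ f i x = 0 := sign_eq_zero_iff

lemma apply_eq_zero_iff_of_sgnVec_eq {x y : V} (h : sgnVec f y = sgnVec f x) {i : ι} :
    f i y = 0 ↔ f i x = 0 := by
  rw [← sgnVec_apply_eq_zero, h, sgnVec_apply_eq_zero]

lemma mem_faceOf_self (x : V) : x ∈ faceOf f x := rfl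

lemma faceOf_eq_faceOf_iff {x y : V} : faceOf f x = faceOf f y ↔ sgnVec f x = sgnVec f y :=
  ⟨fun h => (h ▸ mem_faceOf_self x : x ∈ faceOf f y), fun h => by simp only [faceOf, h]⟩

lemma forall_mem_faceOf_apply_eq_zero_iff {x : V} {i : ι} :
    (∀ y ∈ faceOf f x, f i y = 0) ↔ f i x = 0 :=
  ⟨fun h => h x (mem_faceOf_self x), fun h _ hy => (apply_eq_zero_iff_of_sgnVec_eq hy).mpr h⟩

lemma eventually_sgnVec_add_smul [Finite ι] (y w : V) :
    ∀ᶠ t in 𝓝[>] (0 : ℝ), sgnVec f (y + t • w) = signComp (sgnVec f y) (sgnVec f w) := by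
  simp only [funext_iff, eventually_all]
  intro i
  simpa [sgnVec, signComp] using eventually_sign_add_mul (f i y) (f i w)

lemma exists_sgnVec_eq_signComp [Finite ι] (y w : V) :
    ∃ x, sgnVec f x = signComp (sgnVec f y) (sgnVec f w) :=
  let ⟨_, ht⟩ := (eventually_sgnVec_add_smul y w).exists
  ⟨_, ht⟩

lemma faceOf_subset_closure_faceOf [Finite ι] {x y w : V}
    (hx : sgnVec f x = signComp (sgnVec f y) (sgnVec f w)) :
    faceOf f y ⊆ closure (faceOf f x) := by
  intro z (hz : sgnVec f z = sgnVec f y)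
  have hlim : Tendsto (fun t : ℝ => z + t • w) (𝓝[>] 0) (𝓝 z) :=
    tendsto_nhdsWithin_of_tendsto_nhds
      ((continuous_const.add (continuous_id.smul continuous_const)).tendsto' 0 z (by simp))
  refine mem_closure_of_tendsto hlim ?_
  filter_upwards [eventually_sgnVec_add_smul (f := f) z w] with t ht
  exact ht.trans (hz ▸ hx.symm)

lemma mem_span_faceOf [Finite ι] {y z : V} (hz : ∀ i, f i y = 0 → f i z = 0) :
    z ∈ Submodule.span ℝ (faceOf f y) := by
  obtain ⟨t, ht, ht0 : 0 < t⟩ :=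
    ((eventually_sgnVec_add_smul (f := f) y z).and self_mem_nhdsWithin).exists
  have hmem : y + t • z ∈ faceOf f y :=
    ht.trans (signComp_eq_left fun i hi =>
      sgnVec_apply_eq_zero.mpr (hz i (sgnVec_apply_eq_zero.mp hi)))
  have hz_eq : z = t⁻¹ • ((y + t • z) - y) := by
    rw [add_sub_cancel_left, smul_smul, inv_mul_cancel₀ ht0.ne', one_smul]
  rw [hz_eq]
  exact Submodule.smul_mem _ _ (Submodule.sub_mem _ (Submodule.subset_span hmem)
    (Submodule.subset_span (mem_faceOf_self y)))

section FiniteDimensional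

variable [FiniteDimensional ℝ V]

lemma eventually_sign_apply_eq (g : V →ₗ[ℝ] ℝ) {y : V} (hy : g y ≠ 0) :
    ∀ᶠ z in 𝓝 y, SignType.sign (g z) = SignType.sign (g y) :=
  (g.continuous_of_finiteDimensional.tendsto y).eventually (eventually_sign_eq hy)

lemma isOpen_faceOf [Finite ι] {x : V} (hx : ∀ i, f i x ≠ 0) : IsOpen (faceOf f x) := by
  refine isOpen_iff_mem_nhds.mpr fun y (hy : sgnVec f y = sgnVec f x) => ?_
  have hy0 : ∀ i, f i y ≠ 0 := fun i => (apply_eq_zero_iff_of_sgnVec_eq hy).not.mpr (hx i)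
  filter_upwards [eventually_all (ι := ι).mpr fun i => eventually_sign_apply_eq (f i) (hy0 i)]
    with z hz
  exact (funext hz).trans hy

lemma span_faceOf_eq_top [Finite ι] {x : V} (hx : ∀ i, f i x ≠ 0) :
    Submodule.span ℝ (faceOf f x) = ⊤ :=
  Submodule.eq_top_of_nonempty_interior' _
    ⟨x, interior_maximal Submodule.subset_span (isOpen_faceOf hx) (mem_faceOf_self x)⟩

lemma sign_apply_eq_of_mem_closure_faceOf {x y : V} (hy : y ∈ closure (faceOf f x)) {i : ι}
    (hi : f i y ≠ 0) : SignType.sign (f i y) = SignType.sign (f i x) := by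
  obtain ⟨z, hz : sgnVec f z = sgnVec f x, hzy⟩ :=
    ((mem_closure_iff_frequently.mp hy).and_eventually (eventually_sign_apply_eq (f i) hi)).exists
  exact hzy.symm.trans (congrFun hz i)

lemma sgnVec_eq_of_mem_closure_faceOf {x c y : V} (hx : y ∈ closure (faceOf f x))
    (hc : y ∈ closure (faceOf f c))
    (h : ∀ i, f i y = 0 → SignType.sign (f i x) = SignType.sign (f i c)) :
    sgnVec f x = sgnVec f c := by
  funext i
  by_cases hi : f i y = 0
  · exact h i hi
  · exact (sign_apply_eq_of_mem_closure_faceOf hx hi).symm.trans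
      (sign_apply_eq_of_mem_closure_faceOf hc hi)

end FiniteDimensional

variable (f) in
def Face.of (x : V) : Face f := ⟨faceOf f x, x, rfl⟩

lemma Face.of_val (x : V) : (Face.of f x).1 = faceOf f x := rfl

lemma Face.exists_eq_of (C : Face f) : ∃ x, C = Face.of f x :=
  let ⟨x, hx⟩ := C.2
  ⟨x, Subtype.ext hx⟩

lemma isChamber_of {x : V} (hx : ∀ i, f i x ≠ 0) : IsChamber f (Face.of f x) :=
  fun i _ hy => (apply_eq_zero_iff_of_sgnVec_eq hy).not.mpr (hx i)

lemma IsCodimOne.exists_apply_eq_zero_iff {x : V} (h : IsCodimOne f (Face.of f x)) :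
    ∃ i₀, ∀ i, f i x = 0 ↔ i = i₀ := by
  obtain ⟨i₀, h₀, huniq⟩ := h
  refine ⟨i₀, fun i => ⟨fun hi => huniq i (forall_mem_faceOf_apply_eq_zero_iff.mpr hi), ?_⟩⟩
  rintro rfl
  exact forall_mem_faceOf_apply_eq_zero_iff.mp h₀

section CodimOne

variable {d : V} {i₀ : ι} (hd : ∀ i, f i d = 0 ↔ i = i₀)
include hd

lemma exists_chamber_above_of_codimOne [Finite ι] {w : V} (hw : f i₀ w ≠ 0) :
    ∃ x, (∀ i, f i x ≠ 0) ∧ SignType.sign (f i₀ x) = SignType.sign (f i₀ w) ∧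
      FaceLE (Face.of f d) (Face.of f x) := by
  obtain ⟨x, hx⟩ := exists_sgnVec_eq_signComp (f := f) d w
  have hsign : ∀ i, SignType.sign (f i x) =
      if f i d = 0 then SignType.sign (f i w) else SignType.sign (f i d) := fun i => by
    simpa [sgnVec, signComp] using congrFun hx i
  refine ⟨x, fun i => ?_, ?_, faceOf_subset_closure_faceOf hx⟩
  · rw [← sign_ne_zero, hsign]
    split_ifs with h
    · exact sign_ne_zero.mpr ((hd i).mp h ▸ hw)
    · exact sign_ne_zero.mpr h
  · simpa [(hd i₀).mpr rfl] using hsign i₀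

lemma face_eq_of_sign_eq_of_codimOne [FiniteDimensional ℝ V] {x c : V}
    (hx : FaceLE (Face.of f d) (Face.of f x)) (hc : FaceLE (Face.of f d) (Face.of f c))
    (h : SignType.sign (f i₀ x) = SignType.sign (f i₀ c)) : Face.of f x = Face.of f c :=
  Subtype.ext <| faceOf_eq_faceOf_iff.mpr <|
    sgnVec_eq_of_mem_closure_faceOf (hx (mem_faceOf_self d)) (hc (mem_faceOf_self d))
      fun i hi => (hd i).mp hi ▸ h

lemma span_faceOf_eq_ker [Finite ι] : Submodule.span ℝ (faceOf f d) = LinearMap.ker (f i₀) :=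
  le_antisymm
    (Submodule.span_le.mpr fun _ ↦ forall_mem_faceOf_apply_eq_zero_iff.mpr ((hd i₀).mpr rfl) _)
    fun _ hz => mem_span_faceOf fun i hi => (hd i).mp hi ▸ hz

end CodimOne

end Arrangement

theorem statement16_general (n : ℕ) {ι : Type*} [Finite ι]
    (f : ι → (Fin n → ℝ) →ₗ[ℝ] ℝ) (hf : ∀ i, f i ≠ 0)
    (D : Face f) (hD : IsCodimOne f D) :
    ∃ C1 C2 : Face f, C1 ≠ C2 ∧
      IsChamber f C1 ∧ IsChamber f C2 ∧ FaceLE D C1 ∧ FaceLE D C2 ∧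
      (∀ C : Face f, IsChamber f C → FaceLE D C → C = C1 ∨ C = C2) ∧
      Opposed f C1 C2 D := by
  obtain ⟨d, rfl⟩ := D.exists_eq_of
  obtain ⟨i₀, hd⟩ := IsCodimOne.exists_apply_eq_zero_iff hD
  obtain ⟨e, he⟩ := LinearMap.surjective (hf i₀) 1
  obtain ⟨x₁, hx₁, hs₁, hle₁⟩ := exists_chamber_above_of_codimOne hd (w := e) (by simp [he])
  obtain ⟨x₂, hx₂, hs₂, hle₂⟩ := exists_chamber_above_of_codimOne hd (w := -e) (by simp [he])
  simp only [he, map_neg, sign_one, sign_neg, neg_one_lt_zero] at hs₁ hs₂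
  have hne : Face.of f x₁ ≠ Face.of f x₂ := fun h => by
    have h₁₂ := congrFun (faceOf_eq_faceOf_iff.mp (congrArg Subtype.val h)) i₀
    simp only [sgnVec, hs₁, hs₂] at h₁₂
    exact absurd h₁₂ (by decide)
  refine ⟨Face.of f x₁, Face.of f x₂, hne, isChamber_of hx₁, isChamber_of hx₂, hle₁, hle₂, ?_,
    hne, ?_, hle₁, hle₂, ?_, ?_⟩
  · intro C hc hle
    obtain ⟨c, rfl⟩ := C.exists_eq_of
    rcases (hc i₀ c (mem_faceOf_self c)).lt_or_gt with hneg | hpos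
    · exact .inr (face_eq_of_sign_eq_of_codimOne hd hle₂ hle (by rw [hs₂, sign_neg hneg])).symm
    · exact .inl (face_eq_of_sign_eq_of_codimOne hd hle₁ hle (by rw [hs₁, sign_pos hpos])).symm
  · simp only [Face.of_val, span_faceOf_eq_top hx₁, span_faceOf_eq_top hx₂]
  · rw [Face.of_val, Face.of_val, span_faceOf_eq_ker hd, span_faceOf_eq_top hx₁, finrank_top]
    exact Module.Dual.finrank_ker_add_one_of_ne_zero (hf i₀)
  · intro i hi y (hy : sgnVec f y = sgnVec f x₁) z (hz : sgnVec f z = sgnVec f x₂)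
    obtain rfl := (hd i).mp (forall_mem_faceOf_apply_eq_zero_iff.mp hi)
    have hy₁ : SignType.sign (f i y) = 1 := (congrFun hy i).trans hs₁
    have hz₂ : SignType.sign (f i z) = -1 := (congrFun hz i).trans hs₂
    rw [hy₁, hz₂]
    decide

/-- Let `D` be a codimension-one face of a finite arrangement of linear
hyperplanes through the origin in `ℝ^n`. Then there are exactly two chambers `C` with
`D ≤ C`, and these two chambers are opposed by `D`. -/
theorem statement16 (n : ℕ) {ι : Type*} [Finite ι]
    (f : ι → (Fin n → ℝ) →ₗ[ℝ] ℝ) (hf : ∀ i, f i ≠ 0)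
    (hker : ∀ p q : ι, LinearMap.ker (f p) = LinearMap.ker (f q) → p = q)
    (D : Face f) (hD : IsCodimOne f D) :
    ∃ C1 C2 : Face f, C1 ≠ C2 ∧
      IsChamber f C1 ∧ IsChamber f C2 ∧ FaceLE D C1 ∧ FaceLE D C2 ∧
      (∀ C : Face f, IsChamber f C → FaceLE D C → C = C1 ∨ C = C2) ∧
      Opposed f C1 C2 D :=
  statement16_general n f hf D hD

end
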